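/- arXiv:2311.18767 — 3 statements merged into one kernel-verified Lean document; each statement's English description precedes it below -/
import Mathlib

section
/- Let φ be holomorphic on the unit disk 𝔻 with finite weighted L² norm, i.e., ∫_𝔻 |φ(z)|² ρ_𝔻(z)⁻¹ d²z < ∞ where ρ_𝔻(z) = 4/(1−|z|²)². Then the weighted sup-norm is controlled by the weighted L²-norm: sup_{z∈𝔻} |φ(z)|ρ_𝔻(z)⁻¹ ≤ √(3/(4π)) · (∫_𝔻 |φ(z)|² ρ_𝔻(z)⁻¹ d²z)^{1/2}. In particular A₂(𝔻) ⊆ A_∞(𝔻). -/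
open Complex Metric Set MeasureTheory
open scoped Real

/-!
Write `φ z = ∑ aₙ zⁿ`. On the circle `|z| = r`, Parseval's identity for the Fourier series of
`θ ↦ φ (r e^{iθ})` gives `∑ |aₙ|² r²ⁿ ≤ ⨍ |φ|²`. Integrating this in polar coordinates against
`2π r (1 - r²)² / 4` and using `∫₀¹ r²ⁿ⁺¹ (1 - r²)² dr = 1 / ((n+1)(n+2)(n+3))` yields
`(π / 12) ∑ |aₙ|² / C(n+3, 3) ≤ ∫_𝔻 |φ|² ρ⁻¹`. By Cauchy–Schwarz and
`∑ C(n+3, 3) t²ⁿ = (1 - t²)⁻⁴`, the bound `|φ z| ≤ ∑ |aₙ| |z|ⁿ` then becomes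
`|φ z| ≤ √(12 / π · ∫_𝔻 |φ|² ρ⁻¹) / (1 - |z|²)²`; multiplying by `ρ⁻¹(z) = (1 - |z|²)² / 4`
turns the constant into `√(12 / π) / 4 = √(3 / (4π))`.
-/

noncomputable def taylorCoeff (φ : ℂ → ℂ) (c : ℂ) (n : ℕ) : ℂ :=
  (n.factorial : ℂ)⁻¹ * iteratedDeriv n φ c

theorem norm_le_of_forall_sum_norm_taylorCoeff_mul_pow_le {φ : ℂ → ℂ} {c z : ℂ} {R B : ℝ}
    (hφ : DifferentiableOn ℂ φ (ball c R)) (hz : z ∈ ball c R)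
    (hB : ∀ N, ∑ n ∈ Finset.range N, ‖taylorCoeff φ c n‖ * ‖z - c‖ ^ n ≤ B) : ‖φ z‖ ≤ B := by
  refine le_of_tendsto' (Complex.hasSum_taylorSeries_on_ball hφ hz).tendsto_sum_nat.norm
    fun N => (norm_sum_le _ _).trans (le_of_eq_of_le (Finset.sum_congr rfl fun n _ => ?_) (hB N))
  rw [taylorCoeff, norm_smul, norm_smul, norm_mul, norm_pow]
  ring

theorem fourierCoeffOn_circleMap {φ : ℂ → ℂ} {c : ℂ} {r : ℝ} (hr : 0 < r)
    (hφ : DifferentiableOn ℂ φ (closedBall c r)) (n : ℕ) :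
    fourierCoeffOn Real.two_pi_pos (fun θ => φ (circleMap c r θ)) n =
      taylorCoeff φ c n * r ^ n := by
  have hcauchy := hφ.circleIntegral_one_div_sub_center_pow_smul hr n
  have hr' : (r : ℂ) ≠ 0 := mod_cast hr.ne'
  -- `fourierCoeffOn` on `[0, 2π]` lives on the circle of period `2π - 0`.
  have hintegrand : ∀ θ : ℝ, deriv (circleMap c r) θ •
      (1 / (circleMap c r θ - c) ^ (n + 1)) • φ (circleMap c r θ) =
      I / r ^ n * (fourier (-n) (θ : AddCircle (2 * π - 0)) • φ (circleMap c r θ)) := by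
    intro θ
    have hfourier : fourier (-n) (θ : AddCircle (2 * π - 0)) = (cexp (θ * I) ^ n)⁻¹ := by
      rw [fourier_coe_apply, sub_zero, ← exp_nat_mul, ← exp_neg]
      congr 1
      push_cast
      field_simp
    rw [deriv_circleMap, circleMap_sub_center, circleMap_zero, hfourier]
    simp only [smul_eq_mul]
    field_simp
    ring
  rw [circleIntegral, intervalIntegral.integral_congr (fun θ _ => hintegrand θ),
    intervalIntegral.integral_const_mul] at hcauchy
  rw [fourierCoeffOn_eq_integral, taylorCoeff,
    eq_div_of_mul_eq (div_ne_zero I_ne_zero (pow_ne_zero _ hr')) ((mul_comm _ _).trans hcauchy)]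
  simp only [sub_zero, smul_eq_mul, real_smul]
  push_cast
  field_simp

theorem sum_sq_norm_taylorCoeff_mul_pow_le_circleAverage {φ : ℂ → ℂ} {c : ℂ} {r : ℝ}
    (hr : 0 < r) (hφ : DifferentiableOn ℂ φ (closedBall c r)) (N : ℕ) :
    ∑ n ∈ Finset.range N, ‖taylorCoeff φ c n‖ ^ 2 * r ^ (2 * n) ≤
      Real.circleAverage (fun z => ‖φ z‖ ^ 2) c r := by
  have hcont : Continuous fun θ => φ (circleMap c r θ) :=
    hφ.continuousOn.comp_continuous (continuous_circleMap c r)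
      fun θ => sphere_subset_closedBall (circleMap_mem_sphere c hr.le θ)
  obtain ⟨C, hC⟩ := (isCompact_sphere c r).exists_bound_of_continuousOn
    (hφ.continuousOn.mono sphere_subset_closedBall)
  have hL2 : MemLp (fun θ => φ (circleMap c r θ)) 2 (volume.restrict (Ioc 0 (2 * π))) :=
    .of_bound hcont.aestronglyMeasurable C
      (ae_of_all _ fun θ => hC _ (circleMap_mem_sphere c hr.le θ))
  have hparseval := sum_le_hasSum ((Finset.range N).map Nat.castEmbedding)
    (fun _ _ => sq_nonneg _) (hasSum_sq_fourierCoeffOn Real.two_pi_pos hL2)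
  rw [Real.circleAverage_def]
  simpa [fourierCoeffOn_circleMap hr hφ, mul_pow, ← pow_mul, abs_of_pos hr, mul_comm 2]
    using hparseval

section PolarCoord

variable {E : Type*} [NormedAddCommGroup E] [NormedSpace ℝ E]

theorem integrableOn_polarCoord_target {F : ℂ → E} (hF : Integrable F) :
    IntegrableOn (fun p : ℝ × ℝ => p.1 • F (Complex.polarCoord.symm p)) polarCoord.target := by
  have hF' : Integrable (F ∘ measurableEquivRealProd.symm) :=
    (Complex.volume_preserving_equiv_real_prod.symm.integrable_comp_emb
      measurableEquivRealProd.symm.measurableEmbedding).2 hF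
  have hjacobian := (integrableOn_image_iff_integrableOn_abs_det_fderiv_smul volume
    polarCoord.open_target.measurableSet
    (fun p _ => (hasFDerivAt_polarCoord_symm p).hasFDerivWithinAt) polarCoord.symm.injOn _).1
    (by rw [polarCoord.symm_image_target_eq_source]; exact hF'.integrableOn)
  refine hjacobian.congr_fun (fun p hp => ?_) polarCoord.open_target.measurableSet
  simp only [det_fderivPolarCoordSymm, abs_of_pos (mem_Ioi.1 hp.1)]
  rfl

theorem integral_Ioo_smul_comp_polarCoord_symm [CompleteSpace E] (F : ℂ → E) (r : ℝ) :
    ∫ θ in Ioo (-π) π, r • F (Complex.polarCoord.symm (r, θ)) =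
      (2 * π * r) • Real.circleAverage F 0 r := by
  have hcircle : ∀ θ : ℝ, Complex.polarCoord.symm (r, θ) = circleMap 0 r θ := fun θ => by
    simp [circleMap, exp_mul_I]
  have hperiodic := (periodic_circleMap 0 r).comp F |>.intervalIntegral_add_eq (-π) 0
  rw [show -π + 2 * π = π by ring, zero_add] at hperiodic
  rw [integral_smul, mul_comm, ← smul_smul, Real.circleAverage_def,
    smul_inv_smul₀ Real.two_pi_pos.ne', ← integral_Ioc_eq_integral_Ioo,
    ← intervalIntegral.integral_of_le (by linarith [Real.pi_pos])]
  simp only [hcircle]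
  exact congrArg (r • ·) hperiodic

variable {F : ℂ → E} {R : ℝ}

theorem polarCoord_symm_mem_ball_zero_iff {p : ℝ × ℝ} (hp : 0 < p.1) :
    Complex.polarCoord.symm p ∈ ball 0 R ↔ p.1 < R := by
  rw [mem_ball_zero_iff, Complex.norm_polarCoord_symm, abs_of_pos hp]

theorem integrableOn_Ioo_prod_polarCoord_symm (hF : IntegrableOn F (ball 0 R)) :
    IntegrableOn (fun p : ℝ × ℝ => p.1 • F (Complex.polarCoord.symm p))
      (Ioo 0 R ×ˢ Ioo (-π) π) := by
  have hsub : Ioo 0 R ×ˢ Ioo (-π) π ⊆ polarCoord.target := fun p hp => ⟨hp.1.1, hp.2⟩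
  refine ((integrableOn_polarCoord_target ((integrable_indicator_iff measurableSet_ball).2 hF)
    ).mono_set hsub).congr_fun (fun p hp => ?_) (measurableSet_Ioo.prod measurableSet_Ioo)
  dsimp only
  rw [indicator_of_mem ((polarCoord_symm_mem_ball_zero_iff hp.1.1).2 hp.1.2)]

theorem integral_ball_eq_integral_Ioo_prod :
    ∫ z in ball 0 R, F z =
      ∫ p in Ioo 0 R ×ˢ Ioo (-π) π, p.1 • F (Complex.polarCoord.symm p) := by
  have hsub : Ioo 0 R ×ˢ Ioo (-π) π ⊆ polarCoord.target := fun p hp => ⟨hp.1.1, hp.2⟩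
  rw [← integral_indicator measurableSet_ball, ← Complex.integral_comp_polarCoord_symm,
    setIntegral_eq_of_subset_of_forall_sdiff_eq_zero polarCoord.open_target.measurableSet hsub]
  · refine setIntegral_congr_fun (measurableSet_Ioo.prod measurableSet_Ioo) fun p hp => ?_
    rw [indicator_of_mem ((polarCoord_symm_mem_ball_zero_iff hp.1.1).2 hp.1.2)]
  · rintro p ⟨hp, hpS⟩
    rw [indicator_of_notMem, smul_zero]
    rw [polarCoord_symm_mem_ball_zero_iff hp.1]
    exact fun hpR => hpS ⟨⟨hp.1, hpR⟩, hp.2⟩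

variable [CompleteSpace E]

theorem intervalIntegrable_smul_circleAverage (hR : 0 ≤ R) (hF : IntegrableOn F (ball 0 R)) :
    IntervalIntegrable (fun r => (2 * π * r) • Real.circleAverage F 0 r) volume 0 R := by
  have h := integrableOn_Ioo_prod_polarCoord_symm hF
  rw [IntegrableOn, Measure.volume_eq_prod, ← Measure.prod_restrict] at h
  exact (intervalIntegrable_iff_integrableOn_Ioo_of_le hR).2
    (h.integral_prod_left.congr (ae_of_all _ (integral_Ioo_smul_comp_polarCoord_symm F)))

theorem integral_ball_eq_intervalIntegral_circleAverage (hR : 0 ≤ R)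
    (hF : IntegrableOn F (ball 0 R)) :
    ∫ z in ball 0 R, F z = ∫ r in 0..R, (2 * π * r) • Real.circleAverage F 0 r := by
  have h := integrableOn_Ioo_prod_polarCoord_symm hF
  rw [Measure.volume_eq_prod] at h
  rw [integral_ball_eq_integral_Ioo_prod, Measure.volume_eq_prod, setIntegral_prod _ h,
    intervalIntegral.integral_of_le hR, integral_Ioc_eq_integral_Ioo]
  exact setIntegral_congr_fun measurableSet_Ioo fun r _ =>
    integral_Ioo_smul_comp_polarCoord_symm F r

end PolarCoord

theorem intervalIntegral_sum_sq_norm_taylorCoeff_le_integral_ball {φ : ℂ → ℂ} {R : ℝ}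
    {w : ℝ → ℝ} (hR : 0 ≤ R) (hφ : DifferentiableOn ℂ φ (ball 0 R)) (hw : Continuous w)
    (hw0 : 0 ≤ w) (hint : IntegrableOn (fun z => ‖φ z‖ ^ 2 * w ‖z‖) (ball 0 R)) (N : ℕ) :
    ∫ r in 0..R, 2 * π * r *
        (w r * ∑ n ∈ Finset.range N, ‖taylorCoeff φ 0 n‖ ^ 2 * r ^ (2 * n)) ≤
      ∫ z in ball 0 R, ‖φ z‖ ^ 2 * w ‖z‖ := by
  rw [integral_ball_eq_intervalIntegral_circleAverage hR hint]
  refine intervalIntegral.integral_mono_on_of_le_Ioo hR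
    ((by fun_prop : Continuous _).intervalIntegrable _ _)
    (intervalIntegrable_smul_circleAverage hR hint) fun r ⟨hr0, hrR⟩ => ?_
  have hweight : Real.circleAverage (fun z => ‖φ z‖ ^ 2 * w ‖z‖) 0 r =
      w r * Real.circleAverage (fun z => ‖φ z‖ ^ 2) 0 r := by
    rw [← smul_eq_mul, ← Real.circleAverage_fun_smul]
    refine Real.circleAverage_congr_sphere fun z hz => ?_
    rw [mem_sphere_zero_iff_norm.1 hz, abs_of_pos hr0, smul_eq_mul, mul_comm]
  rw [smul_eq_mul, hweight]
  gcongr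
  · exact hw0 r
  · exact sum_sq_norm_taylorCoeff_mul_pow_le_circleAverage hr0
      (hφ.mono (closedBall_subset_ball hrR)) N

theorem integral_pow_mul_one_sub_sq_sq (n : ℕ) :
    ∫ r in (0 : ℝ)..1, r ^ (2 * n + 1) * (1 - r ^ 2) ^ 2 =
      1 / (((n : ℝ) + 1) * (n + 2) * (n + 3)) := by
  have hexpand : ∀ r : ℝ, r ^ (2 * n + 1) * (1 - r ^ 2) ^ 2 =
      r ^ (2 * n + 1) - 2 * r ^ (2 * n + 3) + r ^ (2 * n + 5) := fun r => by ring
  have hpow (k : ℕ) : IntervalIntegrable (fun r : ℝ => r ^ k) volume 0 1 :=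
    intervalIntegral.intervalIntegrable_pow k
  simp only [hexpand]
  rw [intervalIntegral.integral_add ((hpow _).sub ((hpow _).const_mul 2)) (hpow _),
    intervalIntegral.integral_sub (hpow _) ((hpow _).const_mul 2),
    intervalIntegral.integral_const_mul, integral_pow, integral_pow, integral_pow]
  field_simp
  push_cast
  ring

theorem cast_choose_three_mul_six (n : ℕ) :
    ((n + 3).choose 3 : ℝ) * 6 = (n + 1) * (n + 2) * (n + 3) := by
  have h := Nat.descFactorial_eq_factorial_mul_choose (n + 3) 3
  simp only [Nat.descFactorial_succ, Nat.reduceSubDiff, Nat.add_one_sub_one, tsub_zero,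
    Nat.descFactorial_zero, mul_one, Nat.factorial, Nat.succ_eq_add_one, Nat.reduceAdd, zero_add,
    Nat.reduceMul] at h
  have h' : (n + 3).choose 3 * 6 = (n + 1) * (n + 2) * (n + 3) := by linarith
  exact_mod_cast h'

theorem sum_sq_norm_taylorCoeff_div_choose_le {φ : ℂ → ℂ}
    (hφ : DifferentiableOn ℂ φ (ball 0 1))
    (hint : IntegrableOn (fun z => ‖φ z‖ ^ 2 * ((1 - ‖z‖ ^ 2) ^ 2 / 4)) (ball 0 1)) (N : ℕ) :
    ∑ n ∈ Finset.range N, ‖taylorCoeff φ 0 n‖ ^ 2 / (n + 3).choose 3 ≤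
      12 / π * ∫ z in ball 0 1, ‖φ z‖ ^ 2 * ((1 - ‖z‖ ^ 2) ^ 2 / 4) := by
  have hbessel := intervalIntegral_sum_sq_norm_taylorCoeff_le_integral_ball zero_le_one hφ
    (w := fun r => (1 - r ^ 2) ^ 2 / 4) (by fun_prop) (fun r => by positivity) hint N
  have hradial : ∫ r in (0 : ℝ)..1, 2 * π * r * ((1 - r ^ 2) ^ 2 / 4 *
      ∑ n ∈ Finset.range N, ‖taylorCoeff φ 0 n‖ ^ 2 * r ^ (2 * n)) =
      π / 12 * ∑ n ∈ Finset.range N, ‖taylorCoeff φ 0 n‖ ^ 2 / (n + 3).choose 3 := by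
    simp_rw [Finset.mul_sum]
    rw [intervalIntegral.integral_finsetSum fun n _ =>
      (by fun_prop : Continuous _).intervalIntegrable _ _]
    refine Finset.sum_congr rfl fun n _ => ?_
    have hterm : ∀ r : ℝ, 2 * π * r * ((1 - r ^ 2) ^ 2 / 4 *
        (‖taylorCoeff φ 0 n‖ ^ 2 * r ^ (2 * n))) =
        π / 2 * ‖taylorCoeff φ 0 n‖ ^ 2 * (r ^ (2 * n + 1) * (1 - r ^ 2) ^ 2) :=
      fun r => by ring
    have hchoose : ((n + 3).choose 3 : ℝ) ≠ 0 := mod_cast (Nat.choose_pos (by omega)).ne'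
    simp only [hterm, intervalIntegral.integral_const_mul, integral_pow_mul_one_sub_sq_sq,
      ← cast_choose_three_mul_six]
    field_simp
    ring
  calc _ = 12 / π * (π / 12 *
        ∑ n ∈ Finset.range N, ‖taylorCoeff φ 0 n‖ ^ 2 / (n + 3).choose 3) := by
        field_simp
    _ ≤ _ := by
        rw [← hradial]
        gcongr

theorem sq_sum_mul_pow_le_of_sum_sq_div_choose_le {b : ℕ → ℝ} {t A : ℝ} {k N : ℕ}
    (ht : t ^ 2 < 1) (hA : ∑ n ∈ Finset.range N, b n ^ 2 / (n + k).choose k ≤ A) :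
    (∑ n ∈ Finset.range N, b n * t ^ n) ^ 2 ≤ A / (1 - t ^ 2) ^ (k + 1) := by
  have hchoose (n : ℕ) : (0 : ℝ) < (n + k).choose k := mod_cast Nat.choose_pos (by omega)
  have hgeom : ∑ n ∈ Finset.range N, ((n + k).choose k : ℝ) * (t ^ 2) ^ n ≤
      1 / (1 - t ^ 2) ^ (k + 1) :=
    sum_le_hasSum _ (fun n _ => by positivity) (hasSum_choose_mul_geometric_of_norm_lt_one k
      (by rwa [Real.norm_of_nonneg (sq_nonneg t)]))
  have hA0 : 0 ≤ A := (Finset.sum_nonneg fun n _ => by positivity).trans hA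
  calc _ ≤ (∑ n ∈ Finset.range N, b n ^ 2 / (n + k).choose k) *
        ∑ n ∈ Finset.range N, ((n + k).choose k : ℝ) * (t ^ 2) ^ n := by
        refine Finset.sum_sq_le_sum_mul_sum_of_sq_le_mul _ (fun n _ => by positivity)
          (fun n _ => by positivity) fun n _ => le_of_eq ?_
        field_simp [(hchoose n).ne']
        ring
    _ ≤ A * (1 / (1 - t ^ 2) ^ (k + 1)) :=
        mul_le_mul hA hgeom (Finset.sum_nonneg fun n _ => by positivity) hA0
    _ = _ := mul_one_div _ _

theorem norm_le_sqrt_mul_integral_div_one_sub_sq_sq {φ : ℂ → ℂ}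
    (hφ : DifferentiableOn ℂ φ (ball 0 1))
    (hint : IntegrableOn (fun z => ‖φ z‖ ^ 2 * ((1 - ‖z‖ ^ 2) ^ 2 / 4)) (ball 0 1))
    {z : ℂ} (hz : z ∈ ball 0 1) :
    ‖φ z‖ ≤ √(12 / π * ∫ w in ball 0 1, ‖φ w‖ ^ 2 * ((1 - ‖w‖ ^ 2) ^ 2 / 4)) /
      (1 - ‖z‖ ^ 2) ^ 2 := by
  have hz2 : ‖z‖ ^ 2 < 1 := by
    rw [mem_ball_zero_iff] at hz
    nlinarith [norm_nonneg z]
  refine norm_le_of_forall_sum_norm_taylorCoeff_mul_pow_le hφ hz fun N => ?_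
  have hsq := sq_sum_mul_pow_le_of_sum_sq_div_choose_le hz2
    (sum_sq_norm_taylorCoeff_div_choose_le hφ hint N)
  rw [sub_zero, ← Real.sqrt_sq (by positivity : 0 ≤ (1 - ‖z‖ ^ 2) ^ 2),
    ← Real.sqrt_div' _ (by positivity), ← pow_mul]
  exact (le_abs_self _).trans (Real.abs_le_sqrt hsq)

/-- The weighted sup-norm of a holomorphic function on the disk is controlled by its
weighted `L²`-norm: `sup |φ| ρ_𝔻⁻¹ ≤ √(3/(4π)) ‖φ‖₂` where `ρ_𝔻(z) = 4/(1-|z|²)²`.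
In particular `A₂(𝔻) ⊆ A_∞(𝔻)`. -/
theorem a2_subset_ainf
    (φ : ℂ → ℂ)
    (hφ : DifferentiableOn ℂ φ (ball (0:ℂ) 1))
    (hint : IntegrableOn (fun z => ‖φ z‖ ^ 2 * ((1 - ‖z‖ ^ 2) ^ 2 / 4)) (ball (0:ℂ) 1)) :
    (∀ z ∈ ball (0:ℂ) 1,
      ‖φ z‖ * ((1 - ‖z‖ ^ 2) ^ 2 / 4) ≤
        Real.sqrt (3 / (4 * Real.pi)) *
          Real.sqrt (∫ w in ball (0:ℂ) 1, ‖φ w‖ ^ 2 * ((1 - ‖w‖ ^ 2) ^ 2 / 4))) ∧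
    BddAbove ((fun z => ‖φ z‖ * ((1 - ‖z‖ ^ 2) ^ 2 / 4)) '' ball (0:ℂ) 1) := by
  set J := ∫ w in ball (0:ℂ) 1, ‖φ w‖ ^ 2 * ((1 - ‖w‖ ^ 2) ^ 2 / 4)
  have hconst : √(3 / (4 * π)) = √(12 / π) / 4 := by
    rw [show 3 / (4 * π) = 12 / π / 4 ^ 2 by field_simp; norm_num,
      Real.sqrt_div' _ (by positivity), Real.sqrt_sq (by norm_num)]
  have hbound : ∀ z ∈ ball (0:ℂ) 1, ‖φ z‖ * ((1 - ‖z‖ ^ 2) ^ 2 / 4) ≤ √(3 / (4 * π)) * √J := by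
    intro z hz
    have hz2 : 0 < 1 - ‖z‖ ^ 2 := by
      rw [mem_ball_zero_iff] at hz
      nlinarith [norm_nonneg z]
    calc ‖φ z‖ * ((1 - ‖z‖ ^ 2) ^ 2 / 4)
        ≤ √(12 / π * J) / (1 - ‖z‖ ^ 2) ^ 2 * ((1 - ‖z‖ ^ 2) ^ 2 / 4) := by
          gcongr
          exact norm_le_sqrt_mul_integral_div_one_sub_sq_sq hφ hint hz
      _ = √(3 / (4 * π)) * √J := by
          rw [hconst, Real.sqrt_mul (by positivity)]
          field_simp
  exact ⟨hbound, _, forall_mem_image.2 hbound⟩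
end

section
/- Let f : 𝔻 → Ω be a conformal map with f(0) = 0. There exists a unique Möbius transformation M (element of PSL₂(ℂ) acting on ℂ̂) with the same 2-jet as f at 0, namely M(ζ) = αζ/(βζ + 1/α) where α² = f'(0) and 2αβ = −f''(0)/f'(0). Moreover, the extension of M to an isometry of hyperbolic 3-space ℍ³ (in the quaternionic upper half-space model) satisfies M(𝔧) = (αβ̄ + 𝔧)/(|β|² + 1/|α|²), where 𝔧 = (0,0,1). -/
open Complex Metric Set Quaternion

/-- The embedding `ℂ ↪ ℍ` of the complex numbers into the quaternions. -/
def QC (z : ℂ) : Quaternion ℝ := ⟨z.re, z.im, 0, 0⟩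

/-- The quaternion `𝔧`, i.e. the point `(0,0,1)` of the upper half-space model of `ℍ³`. -/
def quatJ : Quaternion ℝ := ⟨0, 0, 1, 0⟩

/-! A Möbius map `ζ ↦ (aζ + b)/(cζ + d)` with `ad - bc = 1` and `d ≠ 0` has 2-jet
`(b/d, 1/d², -2c/d³)` at `0`, so its 2-jet determines `(a, b, c, d)` up to a common sign, i.e.
the element of `PSL₂(ℂ)`. With `α² = f'(0)` and `2αβ = -f''(0)/f'(0)` the jet of `M` is
`(0, α², -2βα³)`, which is the jet of `f`; a competitor cannot have its pole at `0` because its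
derivative there is `f'(0) ≠ 0`. On `ℍ³`, the relations `𝔧z = z̄𝔧` and `𝔧² = -1` give
`(α𝔧)(β𝔧 + γ)⁻¹ = (αβ̄ + αγ𝔧)/(|β|² + |γ|²)`, and `γ = 1/α` is the case at hand. -/

open Topology

noncomputable def mobius (a b c d : ℂ) (z : ℂ) : ℂ := (a * z + b) / (c * z + d)

section Mobius

variable {a b c d : ℂ}

theorem hasDerivAt_affine (p q ζ : ℂ) : HasDerivAt (fun z => p * z + q) p ζ := by
  simpa using ((hasDerivAt_id ζ).const_mul p).add_const q

theorem hasDerivAt_mobius {ζ : ℂ} (h : c * ζ + d ≠ 0) :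
    HasDerivAt (mobius a b c d) ((a * d - b * c) / (c * ζ + d) ^ 2) ζ :=
  ((hasDerivAt_affine a b ζ).fun_div (hasDerivAt_affine c d ζ) h).congr_deriv (by ring)

theorem deriv_deriv_mobius {ζ : ℂ} (h : c * ζ + d ≠ 0) :
    deriv (deriv (mobius a b c d)) ζ = -2 * c * (a * d - b * c) / (c * ζ + d) ^ 3 := by
  have hderiv : deriv (mobius a b c d) =ᶠ[𝓝 ζ] fun z => (a * d - b * c) / (c * z + d) ^ 2 := by
    filter_upwards [(hasDerivAt_affine c d ζ).continuousAt.eventually_ne h] with z hz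
    exact (hasDerivAt_mobius hz).deriv
  have hden : HasDerivAt (fun z => (c * z + d) ^ 2) (2 * (c * ζ + d) * c) ζ := by
    simpa using (hasDerivAt_affine c d ζ).fun_pow 2
  rw [hderiv.deriv_eq, ((hasDerivAt_const ζ _).fun_div hden (pow_ne_zero 2 h)).deriv]
  field_simp
  ring

theorem not_continuousAt_mobius_of_pole {ζ : ℂ} (hdet : a * d - b * c ≠ 0)
    (hpole : c * ζ + d = 0) : ¬ ContinuousAt (mobius a b c d) ζ := by
  intro hcont
  have hc : c ≠ 0 := by rintro rfl; apply hdet; simp_all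
  have hpunct : (fun z => (c * z + d) * mobius a b c d z) =ᶠ[𝓝[≠] ζ]
      fun z => a * z + b := by
    filter_upwards [self_mem_nhdsWithin] with z hz
    have : c * z + d ≠ 0 := by
      rw [show c * z + d = c * (z - ζ) by linear_combination hpole]
      exact mul_ne_zero hc (sub_ne_zero.2 hz)
    exact mul_div_cancel₀ _ this
  have hnum : a * ζ + b = 0 := by
    have hlhs := (hasDerivAt_affine c d ζ).continuousAt.mul hcont
    have := (hlhs.eventuallyEq_nhds_iff_eventuallyEq_nhdsNE
      (hasDerivAt_affine a b ζ).continuousAt).1 hpunct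
    simpa [hpole] using this.eq_of_nhds.symm
  exact hdet (by linear_combination a * hpole - c * hnum)

theorem denom_ne_zero_of_deriv_mobius_ne_zero {ζ : ℂ} (hdet : a * d - b * c ≠ 0)
    (h : deriv (mobius a b c d) ζ ≠ 0) : c * ζ + d ≠ 0 := fun hpole =>
  not_continuousAt_mobius_of_pole hdet hpole (differentiableAt_of_deriv_ne_zero h).continuousAt

theorem mobius_twoJet_zero (hdet : a * d - b * c = 1) (hd : d ≠ 0) :
    mobius a b c d 0 = b / d ∧ deriv (mobius a b c d) 0 = 1 / d ^ 2 ∧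
      deriv (deriv (mobius a b c d)) 0 = -2 * c / d ^ 3 := by
  have h0 : c * 0 + d ≠ 0 := by simpa using hd
  refine ⟨by simp [mobius], ?_, ?_⟩
  · rw [(hasDerivAt_mobius h0).deriv, hdet]; simp
  · rw [deriv_deriv_mobius h0, hdet]; simp

theorem mobius_neg : mobius (-a) (-b) (-c) (-d) = mobius a b c d := by
  funext z
  rw [mobius, mobius, ← neg_div_neg_eq]
  ring_nf

theorem mobius_eq_of_twoJet_zero_eq {a' b' c' d' : ℂ} (hdet : a * d - b * c = 1)
    (hdet' : a' * d' - b' * c' = 1) (hd : d ≠ 0) (hd' : d' ≠ 0)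
    (h0 : mobius a b c d 0 = mobius a' b' c' d' 0)
    (h1 : deriv (mobius a b c d) 0 = deriv (mobius a' b' c' d') 0)
    (h2 : deriv (deriv (mobius a b c d)) 0 = deriv (deriv (mobius a' b' c' d')) 0) :
    mobius a b c d = mobius a' b' c' d' := by
  obtain ⟨j0, j1, j2⟩ := mobius_twoJet_zero hdet hd
  obtain ⟨j0', j1', j2'⟩ := mobius_twoJet_zero hdet' hd'
  rw [j0, j0'] at h0
  rw [j1, j1'] at h1
  rw [j2, j2'] at h2
  have hsq : (d' - d) * (d' + d) = 0 := by
    field_simp at h1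
    linear_combination h1
  rcases mul_eq_zero.1 hsq with h | h
  · obtain rfl : d' = d := sub_eq_zero.1 h
    obtain rfl : b' = b := by field_simp at h0; exact h0.symm
    obtain rfl : c' = c := by field_simp at h2; linear_combination h2
    obtain rfl : a' = a := mul_right_cancel₀ hd (by linear_combination hdet' - hdet)
    rfl
  · obtain rfl : d' = -d := eq_neg_of_add_eq_zero_left h
    obtain rfl : b' = -b := by field_simp at h0; linear_combination h0
    obtain rfl : c' = -c := by field_simp at h2; linear_combination -h2
    obtain rfl : a' = -a := mul_right_cancel₀ hd (by linear_combination hdet - hdet')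
    exact mobius_neg.symm

end Mobius

section QuaternionCoords

variable (z : ℂ)

@[simp] theorem QC_re : (QC z).re = z.re := rfl
@[simp] theorem QC_imI : (QC z).imI = z.im := rfl
@[simp] theorem QC_imJ : (QC z).imJ = 0 := rfl
@[simp] theorem QC_imK : (QC z).imK = 0 := rfl

@[simp] theorem quatJ_re : quatJ.re = 0 := rfl
@[simp] theorem quatJ_imI : quatJ.imI = 0 := rfl
@[simp] theorem quatJ_imJ : quatJ.imJ = 1 := rfl
@[simp] theorem quatJ_imK : quatJ.imK = 0 := rfl

end QuaternionCoords

theorem QC_mul_quatJ_mul_inv (α β γ : ℂ) :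
    QC α * quatJ * (QC β * quatJ + QC γ)⁻¹ =
      (‖β‖ ^ 2 + ‖γ‖ ^ 2)⁻¹ • (QC (α * starRingEnd ℂ β) + QC (α * γ) * quatJ) := by
  simp only [Quaternion.inv_def, Quaternion.normSq_def', Complex.sq_norm, Complex.normSq_apply,
    mul_smul_comm]
  congr 1
  · simp [Quaternion.re_mul, Quaternion.imI_mul, Quaternion.imJ_mul, Quaternion.imK_mul]
    ring
  · ext <;> simp [Quaternion.re_mul, Quaternion.imI_mul, Quaternion.imJ_mul, Quaternion.imK_mul,
      sub_eq_add_neg]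

theorem QC_one : QC 1 = 1 := by
  ext <;> simp

theorem osculating_mobius_general
    (f : ℂ → ℂ)
    (hf0 : f 0 = 0) (hf'0 : deriv f 0 ≠ 0)
    (α β : ℂ) (hα : α ^ 2 = deriv f 0)
    (hβ : 2 * α * β = -(deriv (deriv f) 0 / deriv f 0))
    (M : ℂ → ℂ) (hM : M = fun ζ => α * ζ / (β * ζ + 1 / α)) :
    (M 0 = f 0 ∧ deriv M 0 = deriv f 0 ∧ deriv (deriv M) 0 = deriv (deriv f) 0) ∧
    (∀ a b c d : ℂ, a * d - b * c = 1 →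
      ∀ N : ℂ → ℂ, N = (fun ζ => (a * ζ + b) / (c * ζ + d)) →
      N 0 = f 0 → deriv N 0 = deriv f 0 → deriv (deriv N) 0 = deriv (deriv f) 0 →
      ∀ ζ : ℂ, c * ζ + d ≠ 0 → β * ζ + 1 / α ≠ 0 → N ζ = M ζ) ∧
    (QC α * quatJ) * (QC β * quatJ + QC (1 / α))⁻¹ =
      ((‖β‖ ^ 2 + 1 / ‖α‖ ^ 2)⁻¹ : ℝ) • (QC (α * (starRingEnd ℂ) β) + quatJ) := by
  have hα0 : α ≠ 0 := by rintro rfl; exact hf'0 (by rw [← hα]; ring)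
  have hdetM : α * α⁻¹ - 0 * β = 1 := by simp [hα0]
  have hMmob : M = mobius α 0 β α⁻¹ := by subst hM; funext ζ; simp [mobius, one_div]
  have hf2 : deriv (deriv f) 0 = -2 * β * α ^ 3 := by
    rw [← hα] at hβ
    field_simp at hβ
    linear_combination hβ
  have hjet : M 0 = f 0 ∧ deriv M 0 = deriv f 0 ∧ deriv (deriv M) 0 = deriv (deriv f) 0 := by
    obtain ⟨j0, j1, j2⟩ := mobius_twoJet_zero hdetM (inv_ne_zero hα0)
    rw [hMmob, j0, j1, j2, hf0, ← hα, hf2]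
    simp
  refine ⟨hjet, ?_, ?_⟩
  · intro a b c d hdet N hN hN0 hN1 hN2 ζ _ _
    replace hN : N = mobius a b c d := hN
    subst hN
    have hd : d ≠ 0 := by
      simpa using denom_ne_zero_of_deriv_mobius_ne_zero (ζ := 0) (hdet ▸ one_ne_zero) (hN1 ▸ hf'0)
    rw [hMmob] at hjet ⊢
    rw [mobius_eq_of_twoJet_zero_eq hdet hdetM hd (inv_ne_zero hα0) (hN0.trans hjet.1.symm)
      (hN1.trans hjet.2.1.symm) (hN2.trans hjet.2.2.symm)]
  · rw [QC_mul_quatJ_mul_inv, norm_div, norm_one, div_pow, one_pow, mul_one_div_cancel hα0,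
      QC_one, one_mul]

/-- The osculating Möbius transformation: for a conformal `f` with `f 0 = 0` there is a
(unique) Möbius transformation `M(ζ) = αζ/(βζ + 1/α)`, `α² = f'(0)`, `2αβ = -f''(0)/f'(0)`,
with the same 2-jet as `f` at `0`; its isometric extension to `ℍ³` (via quaternions)
satisfies `M(𝔧) = (αβ̄ + 𝔧)/(|β|² + 1/|α|²)`. -/
theorem osculating_mobius
    (f : ℂ → ℂ) (r : ℝ) (hr : 0 < r)
    (hf : DifferentiableOn ℂ f (ball (0:ℂ) r))
    (hinj : InjOn f (ball (0:ℂ) r))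
    (hf0 : f 0 = 0) (hf'0 : deriv f 0 ≠ 0)
    (α β : ℂ) (hα : α ^ 2 = deriv f 0)
    (hβ : 2 * α * β = -(deriv (deriv f) 0 / deriv f 0))
    (M : ℂ → ℂ) (hM : M = fun ζ => α * ζ / (β * ζ + 1 / α)) :
    (M 0 = f 0 ∧ deriv M 0 = deriv f 0 ∧ deriv (deriv M) 0 = deriv (deriv f) 0) ∧
    (∀ a b c d : ℂ, a * d - b * c = 1 →
      ∀ N : ℂ → ℂ, N = (fun ζ => (a * ζ + b) / (c * ζ + d)) →
      N 0 = f 0 → deriv N 0 = deriv f 0 → deriv (deriv N) 0 = deriv (deriv f) 0 →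
      ∀ ζ : ℂ, c * ζ + d ≠ 0 → β * ζ + 1 / α ≠ 0 → N ζ = M ζ) ∧
    (QC α * quatJ) * (QC β * quatJ + QC (1 / α))⁻¹ =
      ((‖β‖ ^ 2 + 1 / ‖α‖ ^ 2)⁻¹ : ℝ) • (QC (α * (starRingEnd ℂ) β) + quatJ) :=
  osculating_mobius_general f hf0 hf'0 α β hα hβ M hM
end

section
/- Define the vector field V on the Weil–Petersson universal Teichmüller space T₀(1) by V_{[μ]} = −4·(𝒮(g_μ))̄/ρ_{𝔻*}, where g_μ : 𝔻* → Ω*_μ is the conformal map associated with [μ]. Then V is the negative Weil–Petersson gradient of the universal Liouville action 𝐒: for every harmonic Beltrami differential ν̇ ∈ H^{−1,1}(𝔻*) ≅ T_{[μ]}T₀(1), (d𝐒)_{[μ]}(ν̇) = 4 Re ∫_{𝔻*} ν̇ 𝒮(g_μ) d²z = −⟨V_{[μ]}, ν̇⟩_WP, and moreover d𝐒(V) = −‖V‖²_WP ≤ 0. -/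
open Complex Metric Set MeasureTheory Filter

/-- The exterior of the closed unit disk in `ℂ` (the finite part of `𝔻*`). -/
def extDisk : Set ℂ := {z : ℂ | 1 < ‖z‖}

/-- The Schwarzian derivative `𝒮(f) = f'''/f' - (3/2)(f''/f')²`. -/
noncomputable def schwarzian (f : ℂ → ℂ) (z : ℂ) : ℂ :=
  deriv (deriv (deriv f)) z / deriv f z - (3 / 2) * (deriv (deriv f) z / deriv f z) ^ 2

/-- `ν` is a harmonic Beltrami differential of Weil–Petersson class on `𝔻*`:
`ν = ρ_{𝔻*}⁻¹ φ̄` with `φ ∈ A₂(𝔻*)`, where `ρ_{𝔻*}(z) = 4/(|z|²-1)²`. -/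
def IsHarmonicBeltramiL2 (ν : ℂ → ℂ) : Prop :=
  ∃ φ : ℂ → ℂ, DifferentiableOn ℂ φ extDisk ∧
    MeasureTheory.IntegrableOn (fun z => ‖φ z‖ ^ 2 * ((‖z‖ ^ 2 - 1) ^ 2 / 4)) extDisk ∧
    ∀ z ∈ extDisk, ν z = (((‖z‖ ^ 2 - 1) ^ 2 / 4 : ℝ) : ℂ) * (starRingEnd ℂ) (φ z)

open scoped Topology ComplexConjugate

/-!
Injectivity of `g` makes `g'` nonvanishing, so `𝒮(g)` is holomorphic and `V` is itself a harmonic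
Beltrami differential of Weil–Petersson class. Since `ρ_{𝔻*}⁻¹ ρ_{𝔻*} = 1`, the integrand
`ν · conj V · ρ_{𝔻*}` is `-4 ν 𝒮(g)`, which turns the first variation formula into
`d𝐒(ν) = -⟨ν, V⟩_WP`; taking `ν = V` gives `d𝐒(V) = -‖V‖²_WP`.
-/

section InjectiveHolomorphic

variable {U : Set ℂ} {g : ℂ → ℂ} {z : ℂ}

lemma eventually_ne_of_injOn (hU : IsOpen U) (hinj : InjOn g U) (hz : z ∈ U) :
    ∀ᶠ w in 𝓝[≠] z, g w ≠ g z := by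
  filter_upwards [nhdsWithin_le_nhds (hU.mem_nhds hz), self_mem_nhdsWithin] with w hw hne
  exact fun hgw => hne (hinj hw hz hgw)

lemma not_eventually_eq_of_injOn (hU : IsOpen U) (hinj : InjOn g U) (hz : z ∈ U) :
    ¬∀ᶠ w in 𝓝 z, g w = g z := fun hconst =>
  ((eventually_ne_of_injOn hU hinj hz).and (hconst.filter_mono nhdsWithin_le_nhds)).exists.elim
    fun _ h => h.1 h.2

lemma nhds_le_map_nhds_of_injOn (hU : IsOpen U) (hg : AnalyticOnNhd ℂ g U) (hinj : InjOn g U)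
    (hz : z ∈ U) : 𝓝 (g z) ≤ map g (𝓝 z) :=
  ((hg z hz).eventually_constant_or_nhds_le_map_nhds).resolve_left
    (not_eventually_eq_of_injOn hU hinj hz)

lemma eventually_deriv_ne_zero_of_injOn (hU : IsOpen U) (hg : AnalyticOnNhd ℂ g U)
    (hinj : InjOn g U) (hz : z ∈ U) : ∀ᶠ w in 𝓝[≠] z, deriv g w ≠ 0 := by
  refine (hg.deriv z hz).eventually_eq_zero_or_eventually_ne_zero.resolve_left fun hzero => ?_
  obtain ⟨r, hr, hball⟩ := eventually_nhds_iff_ball.mp (hzero.and (hU.eventually_mem hz))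
  refine not_eventually_eq_of_injOn hU hinj hz (eventually_of_mem (ball_mem_nhds z hr) ?_)
  intro w hw
  exact isOpen_ball.is_const_of_deriv_eq_zero (convex_ball z r).isPreconnected
    (hg.differentiableOn.mono fun x hx => (hball x hx).2) (fun x hx => (hball x hx).1) hw
    (mem_ball_self hr)

/-- The inverse `g⁻¹` is continuous at `g z` by the open mapping theorem, and holomorphic off the
isolated critical values near `g z`; by the removable singularity theorem it is holomorphic at
`g z`, so `g⁻¹ ∘ g = id` forces `(g⁻¹)'(g z) · g'(z) = 1`. -/
theorem deriv_ne_zero_of_injOn (hU : IsOpen U) (hg : DifferentiableOn ℂ g U) (hinj : InjOn g U)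
    (hz : z ∈ U) : deriv g z ≠ 0 := by
  have hA : AnalyticOnNhd ℂ g U := hg.analyticOnNhd hU
  set h := Function.invFunOn g U
  have hleft : ∀ {x}, x ∈ U → h ∘ g =ᶠ[𝓝 x] id := fun hx =>
    (hU.eventually_mem hx).mono fun _ hy => hinj.leftInvOn_invFunOn hy
  have hcont : ContinuousAt h (g z) := by
    rw [ContinuousAt, show h (g z) = z from hinj.leftInvOn_invFunOn hz]
    exact (tendsto_map'_iff.2 (tendsto_id.congr' (hleft hz).symm)).mono_left
      (nhds_le_map_nhds_of_injOn hU hA hinj hz)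
  have hdiff : ∀ᶠ w in 𝓝[≠] g z, DifferentiableAt ℂ h w := by
    rw [eventually_nhdsWithin_iff]
    refine Eventually.filter_mono (nhds_le_map_nhds_of_injOn hU hA hinj hz) (eventually_map.2 ?_)
    filter_upwards [eventually_nhdsWithin_iff.1 (eventually_deriv_ne_zero_of_injOn hU hA hinj hz),
      hU.eventually_mem hz] with x hx hxU hgx
    exact HasDerivAt.differentiableAt <| HasStrictDerivAt.hasDerivAt <|
      (hA x hxU).hasStrictDerivAt.to_local_left_inverse (hx fun e => hgx (e ▸ rfl)) (hleft hxU)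
  have hchain : HasDerivAt (h ∘ g) (deriv h (g z) * deriv g z) z :=
    (Complex.analyticAt_of_differentiable_on_punctured_nhds_of_continuousAt hdiff
      hcont).differentiableAt.hasDerivAt.comp z (hA z hz).differentiableAt.hasDerivAt
  have hid : HasDerivAt (h ∘ g) 1 z := (hasDerivAt_id z).congr_of_eventuallyEq (hleft hz)
  intro h0
  simpa [h0] using hchain.unique hid

end InjectiveHolomorphic

lemma differentiableOn_schwarzian {U : Set ℂ} {g : ℂ → ℂ} (hU : IsOpen U)
    (hg : DifferentiableOn ℂ g U) (hg' : ∀ z ∈ U, deriv g z ≠ 0) :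
    DifferentiableOn ℂ (schwarzian g) U := by
  have d1 : AnalyticOnNhd ℂ (deriv g) U := (hg.analyticOnNhd hU).deriv
  have d2 : AnalyticOnNhd ℂ (deriv (deriv g)) U := d1.deriv
  have d3 : AnalyticOnNhd ℂ (deriv (deriv (deriv g))) U := d2.deriv
  exact (d3.differentiableOn.div d1.differentiableOn hg').sub
    (((d2.differentiableOn.div d1.differentiableOn hg').pow 2).const_mul (3 / 2))

lemma isOpen_extDisk : IsOpen extDisk :=
  isOpen_lt continuous_const continuous_norm

lemma isHarmonicBeltramiL2_const_mul_conj (c : ℂ) {φ : ℂ → ℂ}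
    (hφ : DifferentiableOn ℂ φ extDisk)
    (hφ2 : IntegrableOn (fun z => ‖φ z‖ ^ 2 * ((‖z‖ ^ 2 - 1) ^ 2 / 4)) extDisk) :
    IsHarmonicBeltramiL2 fun z => c * conj (φ z) * (((‖z‖ ^ 2 - 1) ^ 2 / 4 : ℝ) : ℂ) := by
  refine ⟨fun z => conj c * φ z, hφ.const_mul _, ?_, fun z _ => ?_⟩
  · refine IntegrableOn.congr_fun (hφ2.const_mul (‖c‖ ^ 2)) (fun z _ => ?_)
      isOpen_extDisk.measurableSet
    simp only [norm_mul, RCLike.norm_conj]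
    ring
  · simp only [map_mul, conj_conj]
    ring

lemma sq_sub_one_div_four_mul_four_div {z : ℂ} (hz : z ∈ extDisk) :
    (‖z‖ ^ 2 - 1) ^ 2 / 4 * (4 / (‖z‖ ^ 2 - 1) ^ 2) = 1 := by
  have : ‖z‖ ^ 2 - 1 ≠ 0 := by
    have : (1 : ℝ) < ‖z‖ := hz
    nlinarith
  field_simp

lemma setIntegral_mul_conj_mul_density (ν φ V : ℂ → ℂ)
    (hV : ∀ z, V z = -4 * conj (φ z) * (((‖z‖ ^ 2 - 1) ^ 2 / 4 : ℝ) : ℂ)) :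
    ∫ z in extDisk, ν z * conj (V z) * ((4 / (‖z‖ ^ 2 - 1) ^ 2 : ℝ) : ℂ) =
      -4 * ∫ z in extDisk, ν z * φ z := by
  rw [← integral_const_mul]
  refine setIntegral_congr_fun isOpen_extDisk.measurableSet fun z hz => ?_
  have hρ := congrArg ((↑) : ℝ → ℂ) (sq_sub_one_div_four_mul_four_div hz)
  push_cast at hρ
  simp only [hV, map_mul, map_neg, map_ofNat, conj_conj, conj_ofReal]
  push_cast
  linear_combination (-4 * ν z * φ z) * hρ

/-- The vector field `V_{[μ]} = -4 conj(𝒮(g_μ))/ρ_{𝔻*}` is the negative Weil–Petersson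
gradient of the universal Liouville action: given the Takhtajan–Teo first variation
formula `(d𝐒)(ν̇) = 4 Re ∫_{𝔻*} ν̇ 𝒮(g_μ) d²z`, one has `(d𝐒)(ν̇) = -⟨V, ν̇⟩_WP` for every
harmonic Beltrami differential `ν̇ ∈ H^{-1,1}(𝔻*)`, and `d𝐒(V) = -‖V‖²_WP ≤ 0`. -/
theorem liouville_action_gradient
    (g : ℂ → ℂ)
    (hg : DifferentiableOn ℂ g extDisk)
    (hginj : InjOn g extDisk)
    (hWP : IntegrableOn (fun z => ‖schwarzian g z‖ ^ 2 * ((‖z‖ ^ 2 - 1) ^ 2 / 4)) extDisk)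
    (dS : (ℂ → ℂ) → ℝ)
    (hdS : ∀ ν : ℂ → ℂ, IsHarmonicBeltramiL2 ν →
      dS ν = 4 * (∫ z in extDisk, ν z * schwarzian g z).re)
    (V : ℂ → ℂ)
    (hV : ∀ z : ℂ, V z =
      -4 * (starRingEnd ℂ) (schwarzian g z) * (((‖z‖ ^ 2 - 1) ^ 2 / 4 : ℝ) : ℂ)) :
    (∀ ν : ℂ → ℂ, IsHarmonicBeltramiL2 ν →
      dS ν =
        -(∫ z in extDisk, ν z * (starRingEnd ℂ) (V z) *
            (((4 / (‖z‖ ^ 2 - 1) ^ 2 : ℝ)) : ℂ)).re) ∧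
    dS V = -∫ z in extDisk, ‖V z‖ ^ 2 * (4 / (‖z‖ ^ 2 - 1) ^ 2) ∧
    dS V ≤ 0 := by
  have hgradient : ∀ ν, IsHarmonicBeltramiL2 ν → dS ν =
      -(∫ z in extDisk, ν z * conj (V z) * ((4 / (‖z‖ ^ 2 - 1) ^ 2 : ℝ) : ℂ)).re := by
    intro ν hν
    rw [hdS ν hν, setIntegral_mul_conj_mul_density ν _ V hV]
    simp
  have hVharmonic : IsHarmonicBeltramiL2 V := by
    have hS := differentiableOn_schwarzian isOpen_extDisk hg
      fun z hz => deriv_ne_zero_of_injOn isOpen_extDisk hg hginj hz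
    simpa only [← funext hV] using isHarmonicBeltramiL2_const_mul_conj (-4) hS hWP
  have hnorm : dS V = -∫ z in extDisk, ‖V z‖ ^ 2 * (4 / (‖z‖ ^ 2 - 1) ^ 2) := by
    have hsq : ∀ z, V z * conj (V z) * ((4 / (‖z‖ ^ 2 - 1) ^ 2 : ℝ) : ℂ) =
        ((‖V z‖ ^ 2 * (4 / (‖z‖ ^ 2 - 1) ^ 2) : ℝ) : ℂ) := fun z => by
      rw [mul_conj']
      push_cast
      ring
    rw [hgradient V hVharmonic, funext hsq, integral_complex_ofReal, ofReal_re]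
  exact ⟨hgradient, hnorm, hnorm ▸ neg_nonpos.2 (integral_nonneg fun z => by positivity)⟩
end
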